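/- Let β > 3, η₀ = ((β²-1)^{-1/3}, 0) ∈ ℝ², and A(z) = z₁⁴ + 2β z₁²z₂² + z₂⁴. Then for all ξ ∈ ℝ²: Re A(ξ + iη₀) + (β²-1)^{-1/3} = (ξ₁² + ξ₂² - β(β²-1)^{-2/3})² + 2(β-1)ξ₁²ξ₂² + 2(β-3)(β²-1)^{-2/3} ξ₁² ≥ 0, with equality exactly when ξ = (0, ±√β (β²-1)^{-1/3}). -/
import Mathlib


open Complex

/-- for `β > 3`, `η₀ = ((β²-1)^{-1/3}, 0)`, the identity
`Re A(ξ+iη₀) + (β²-1)^{-1/3} = (ξ₁²+ξ₂²-β(β²-1)^{-2/3})² + 2(β-1)ξ₁²ξ₂²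
 + 2(β-3)(β²-1)^{-2/3} ξ₁² ≥ 0`, with equality exactly at
`ξ = (0, ±√β (β²-1)^{-1/3})`. -/
theorem stmt10 (β : ℝ) (hβ : 3 < β) (ξ1 ξ2 : ℝ) :
    (((ξ1 : ℂ) + (((β ^ 2 - 1) ^ (-(1 : ℝ) / 3) : ℝ) : ℂ) * I) ^ 4
        + 2 * β * ((ξ1 : ℂ) + (((β ^ 2 - 1) ^ (-(1 : ℝ) / 3) : ℝ) : ℂ) * I) ^ 2
            * (ξ2 : ℂ) ^ 2
        + (ξ2 : ℂ) ^ 4).re + (β ^ 2 - 1) ^ (-(1 : ℝ) / 3)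
      = (ξ1 ^ 2 + ξ2 ^ 2 - β * (β ^ 2 - 1) ^ (-(2 : ℝ) / 3)) ^ 2
        + 2 * (β - 1) * ξ1 ^ 2 * ξ2 ^ 2
        + 2 * (β - 3) * (β ^ 2 - 1) ^ (-(2 : ℝ) / 3) * ξ1 ^ 2
    ∧ 0 ≤ (ξ1 ^ 2 + ξ2 ^ 2 - β * (β ^ 2 - 1) ^ (-(2 : ℝ) / 3)) ^ 2
        + 2 * (β - 1) * ξ1 ^ 2 * ξ2 ^ 2
        + 2 * (β - 3) * (β ^ 2 - 1) ^ (-(2 : ℝ) / 3) * ξ1 ^ 2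
    ∧ ((ξ1 ^ 2 + ξ2 ^ 2 - β * (β ^ 2 - 1) ^ (-(2 : ℝ) / 3)) ^ 2
        + 2 * (β - 1) * ξ1 ^ 2 * ξ2 ^ 2
        + 2 * (β - 3) * (β ^ 2 - 1) ^ (-(2 : ℝ) / 3) * ξ1 ^ 2 = 0
      ↔ ξ1 = 0 ∧ (ξ2 = Real.sqrt β * (β ^ 2 - 1) ^ (-(1 : ℝ) / 3)
          ∨ ξ2 = -(Real.sqrt β * (β ^ 2 - 1) ^ (-(1 : ℝ) / 3)))) := by
  set η : ℝ := (β ^ 2 - 1) ^ (-(1 : ℝ) / 3) with hηdef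
  have ht : (0:ℝ) < β ^ 2 - 1 := by nlinarith
  have hηpos : 0 < η := Real.rpow_pos_of_pos ht _
  have h2 : (β ^ 2 - 1) ^ (-(2 : ℝ)/3) = η ^ 2 := by
    rw [hηdef, ← Real.rpow_natCast ((β ^ 2 - 1) ^ (-(1:ℝ)/3)) 2,
      ← Real.rpow_mul ht.le]
    norm_num
  have h4 : (β ^ 2 - 1) * η ^ 4 = η := by
    rw [hηdef, ← Real.rpow_natCast ((β ^ 2 - 1) ^ (-(1:ℝ)/3)) 4,
      ← Real.rpow_mul ht.le]
    nth_rewrite 1 [← Real.rpow_one (β ^ 2 - 1)]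
    rw [← Real.rpow_add ht]
    norm_num
  have hre : (((ξ1 : ℂ) + (η : ℂ) * I) ^ 4
        + 2 * β * ((ξ1 : ℂ) + (η : ℂ) * I) ^ 2 * (ξ2 : ℂ) ^ 2
        + (ξ2 : ℂ) ^ 4).re
      = ξ1^4 - 6*ξ1^2*η^2 + η^4 + 2*β*(ξ1^2-η^2)*ξ2^2 + ξ2^4 := by
    simp only [pow_succ, pow_zero, one_mul, Complex.add_re, Complex.add_im,
      Complex.mul_re, Complex.mul_im, Complex.ofReal_re, Complex.ofReal_im,
      Complex.I_re, Complex.I_im, Complex.re_ofNat, Complex.im_ofNat]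
    ring
  rw [hre, h2]
  have hβ2 : (0:ℝ) ≤ β := by linarith
  have hsq : (Real.sqrt β * η) ^ 2 = β * η ^ 2 := by
    rw [mul_pow, Real.sq_sqrt hβ2]
  refine ⟨by linear_combination -h4, ?_, ?_⟩
  · nlinarith [sq_nonneg (ξ1 ^ 2 + ξ2 ^ 2 - β * η ^ 2),
      mul_nonneg (sq_nonneg ξ1) (sq_nonneg ξ2),
      mul_nonneg (sq_nonneg η) (sq_nonneg ξ1)]
  constructor
  · intro h
    have hC : 2 * (β - 3) * η ^ 2 * ξ1 ^ 2 ≤ 0 := by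
      nlinarith [sq_nonneg (ξ1 ^ 2 + ξ2 ^ 2 - β * η ^ 2),
        mul_nonneg (sq_nonneg ξ1) (sq_nonneg ξ2)]
    have h1 : ξ1 = 0 := by
      by_contra hne
      have h1pos : 0 < ξ1 ^ 2 := by positivity
      have : 0 < 2 * (β - 3) * η ^ 2 * ξ1 ^ 2 :=
        mul_pos (mul_pos (by linarith) (pow_pos hηpos 2)) h1pos
      linarith
    subst h1
    refine ⟨rfl, ?_⟩
    have hz : (ξ2 ^ 2 - β * η ^ 2) ^ 2 = 0 := by nlinarith
    have hz2 : ξ2 ^ 2 - β * η ^ 2 = 0 := by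
      exact pow_eq_zero_iff two_ne_zero |>.mp hz
    have hfac : (ξ2 - Real.sqrt β * η) * (ξ2 + Real.sqrt β * η) = 0 := by
      linear_combination hz2 - hsq
    rcases mul_eq_zero.1 hfac with h | h
    · exact Or.inl (by linarith)
    · exact Or.inr (by linarith)
  · rintro ⟨h1, h | h⟩ <;> subst h1 <;> subst h <;>
      linear_combination ((Real.sqrt β * η) ^ 2 - β * η ^ 2) * hsq
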